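/- For every integer n ≥ 1 and every natural number m: if u_m = −1 then f_n is monotone nonincreasing on the interval [m, m+1], and if u_m = 1 then f_n is monotone nondecreasing on [m, m+1]. -/

import Mathlib

/-!
Column `n + 1` of the triangle `Σ` is the sequence of partial sums of column `n`. From
`u (m * 2^q + j) = -u m * u j` for `j < 2^q` one gets, by induction on `p`, that column `p` is
self-similar along blocks of length `2^p`, `Σ^{m 2^p + j}_p = -u_m Σ^j_p` for `j < 2^p`, and that
`Σ^j_p ≤ 0` on the first block. So on the block `[m 2^p, (m+1) 2^p]` all increments of column
`p + 1` have the sign of `u_m`: the nodes `x^k_{p+1}` are monotone there in the direction of `u_m`,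
and so is their piecewise linear interpolation `f_{p+1}` on `[m, m+1]`.
-/

/-- The ±1 Thue–Morse sequence: `u n = (-1)^(s₂(n)+1)` where `s₂` is the binary digit sum. -/
def u (n : ℕ) : ℤ := (-1) ^ ((Nat.digits 2 n).sum + 1)

/-- The "Pascal triangle" associated to the Thue–Morse sequence:
`Sig k n` is `Σ^k_n` (k the superscript, n the subscript). -/
def Sig : ℕ → ℕ → ℤ
  | k, 0 => u k
  | 0, _ + 1 => 0
  | k + 1, n + 1 => Sig k n + Sig k (n + 1)

/-- The renormalized points `x^k_n = 2^{-(n-1)(n-2)/2} Σ^k_n`. -/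
noncomputable def xkn (n k : ℕ) : ℝ := (Sig k n : ℝ) / 2 ^ ((n - 1) * (n - 2) / 2)

/-- The piecewise linear interpolation `f n` of the points `x^k_n` at `k/2^{n-1}`,
vanishing on the nonpositive reals. -/
noncomputable def f (n : ℕ) (x : ℝ) : ℝ :=
  if x ≤ 0 then 0
  else
    xkn n ⌊(2 : ℝ) ^ (n - 1) * x⌋₊ +
      (2 : ℝ) ^ (n - 1) * (x - (⌊(2 : ℝ) ^ (n - 1) * x⌋₊ : ℝ) / 2 ^ (n - 1)) *
        (xkn n (⌊(2 : ℝ) ^ (n - 1) * x⌋₊ + 1) - xkn n ⌊(2 : ℝ) ^ (n - 1) * x⌋₊)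

open Finset

lemma u_zero : u 0 = -1 := by simp [u]

lemma u_two_mul (m : ℕ) : u (2 * m) = u m := by
  rcases Nat.eq_zero_or_pos m with rfl | hm
  · rfl
  · unfold u
    rw [Nat.digits_def' (by norm_num) (by omega)]
    simp [Nat.mul_div_cancel_left _ two_pos]

lemma u_two_mul_add_one (m : ℕ) : u (2 * m + 1) = -u m := by
  unfold u
  rw [Nat.digits_def' (by norm_num) (by omega), show (2 * m + 1) % 2 = 1 by omega,
    show (2 * m + 1) / 2 = m by omega]
  simp [pow_add, pow_succ]

lemma u_one : u 1 = 1 := by simpa [u_zero] using u_two_mul_add_one 0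

lemma u_mul_self (m : ℕ) : u m * u m = 1 := by
  rw [u, ← pow_add]
  exact Even.neg_one_pow ⟨_, rfl⟩

lemma u_mul_two_pow_add (m : ℕ) {q j : ℕ} (hj : j < 2 ^ q) : u (m * 2 ^ q + j) = -u m * u j := by
  induction q generalizing j with
  | zero =>
    obtain rfl : j = 0 := by omega
    simp [u_zero]
  | succ q ih =>
    obtain ⟨i, rfl | rfl⟩ := Nat.even_or_odd' j
    · rw [show m * 2 ^ (q + 1) + 2 * i = 2 * (m * 2 ^ q + i) by ring, u_two_mul, u_two_mul,
        ih (by omega)]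
    · rw [show m * 2 ^ (q + 1) + (2 * i + 1) = 2 * (m * 2 ^ q + i) + 1 by ring,
        u_two_mul_add_one, u_two_mul_add_one, ih (by omega)]
      ring

lemma Sig_zero_right (k : ℕ) : Sig k 0 = u k := by cases k <;> rfl

lemma Sig_succ_eq_sum (k n : ℕ) : Sig k (n + 1) = ∑ i ∈ range k, Sig i n := by
  induction k with
  | zero => rfl
  | succ k ih => rw [sum_range_succ, ← ih]; exact add_comm (Sig k n) _

lemma Sig_succ_add (a b n : ℕ) :
    Sig (a + b) (n + 1) = Sig a (n + 1) + ∑ i ∈ range b, Sig (a + i) n := by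
  simp only [Sig_succ_eq_sum, sum_range_add]

lemma Sig_succ_sub_Sig_succ {a b : ℕ} (n : ℕ) (hab : a ≤ b) :
    Sig b (n + 1) - Sig a (n + 1) = ∑ i ∈ Ico a b, Sig i n := by
  rw [sum_Ico_eq_sub _ hab, Sig_succ_eq_sum, Sig_succ_eq_sum]

lemma Sig_succ_mul_two_pow_add {p q : ℕ}
    (hself : ∀ m j, j < 2 ^ q → Sig (m * 2 ^ q + j) p = -u m * Sig j p) (m : ℕ) {j : ℕ}
    (hj : j ≤ 2 ^ q) :
    Sig (m * 2 ^ q + j) (p + 1) = Sig (m * 2 ^ q) (p + 1) - u m * Sig j (p + 1) := by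
  rw [Sig_succ_add, Sig_succ_eq_sum j, mul_sum, sub_eq_add_neg, ← sum_neg_distrib]
  congr 1
  refine sum_congr rfl fun i hi => ?_
  rw [hself m i (by simp at hi; omega), neg_mul]

lemma Sig_mul_two_pow_add {p q : ℕ} (hpq : p ≤ q) (m : ℕ) {j : ℕ} (hj : j < 2 ^ q) :
    Sig (m * 2 ^ q + j) p = -u m * Sig j p := by
  induction p generalizing q m j with
  | zero => rw [Sig_zero_right, Sig_zero_right, u_mul_two_pow_add m hj]
  | succ p ih =>
    have hstep := fun q' (hq' : p ≤ q') => Sig_succ_mul_two_pow_add (fun m _ => ih hq' m)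
    have hblock : Sig (2 ^ q) (p + 1) = 0 := by
      obtain ⟨q', rfl⟩ : ∃ q', q = q' + 1 := ⟨q - 1, by omega⟩
      have := hstep q' (by omega) 1 (le_refl (2 ^ q'))
      rw [u_one, one_mul, one_mul, ← two_mul, ← pow_succ'] at this
      linarith
    have hstart : ∀ m, Sig (m * 2 ^ q) (p + 1) = 0 := by
      intro m
      induction m with
      | zero => rw [zero_mul, Sig_succ_eq_sum, sum_range_zero]
      | succ m ihm => rw [add_one_mul, hstep q (by omega) m le_rfl, ihm, hblock]; ring
    rw [hstep q (by omega) m hj.le, hstart, zero_sub, neg_mul]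

lemma Sig_two_pow_add (p : ℕ) {j : ℕ} (hj : j ≤ 2 ^ p) :
    Sig (2 ^ p + j) (p + 1) = Sig (2 ^ p) (p + 1) - Sig j (p + 1) := by
  simpa [u_one] using Sig_succ_mul_two_pow_add (fun m _ => Sig_mul_two_pow_add le_rfl m) 1 hj

lemma Sig_nonpos {p j : ℕ} (hj : j < 2 ^ p) : Sig j p ≤ 0 := by
  induction p generalizing j with
  | zero =>
    obtain rfl : j = 0 := by omega
    simp [Sig_zero_right, u_zero]
  | succ p ih =>
    rcases le_or_gt j (2 ^ p) with hle | hgt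
    · rw [Sig_succ_eq_sum]
      exact sum_nonpos fun i hi => ih (by simp at hi; omega)
    · -- on the second half, `Σ^{2^p + j}_{p+1} = ∑_{j ≤ i < 2^p} Σ^i_p`
      obtain ⟨j, rfl⟩ : ∃ j', j = 2 ^ p + j' := ⟨j - 2 ^ p, by omega⟩
      have hj' : j ≤ 2 ^ p := by rw [pow_succ] at hj; omega
      rw [Sig_two_pow_add p hj', Sig_succ_sub_Sig_succ p hj']
      exact sum_nonpos fun i hi => ih (by simp at hi; omega)

lemma u_mul_Sig_nonneg (p m : ℕ) {j : ℕ} (hj : j < 2 ^ p) : 0 ≤ u m * Sig (m * 2 ^ p + j) p := by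
  rw [Sig_mul_two_pow_add le_rfl m hj, ← mul_assoc, mul_neg, u_mul_self]
  linarith [Sig_nonpos hj]

lemma monotoneOn_u_mul_Sig_succ (p m : ℕ) :
    MonotoneOn (fun k => u m * Sig k (p + 1)) (Set.Icc (m * 2 ^ p) ((m + 1) * 2 ^ p)) := by
  intro a ha b hb hab
  rw [← sub_nonneg, ← mul_sub, Sig_succ_sub_Sig_succ p hab, mul_sum]
  refine sum_nonneg fun i hi => ?_
  obtain ⟨j, rfl⟩ : ∃ j, i = m * 2 ^ p + j := ⟨i - m * 2 ^ p, by simp at hi ha; omega⟩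
  exact u_mul_Sig_nonneg p m (by simp at hi hb; rw [add_one_mul] at hb; omega)

lemma monotoneOn_u_mul_xkn (p m : ℕ) :
    MonotoneOn (fun k => (u m : ℝ) * xkn (p + 1) k) (Set.Icc (m * 2 ^ p) ((m + 1) * 2 ^ p)) := by
  intro a ha b hb hab
  simp only [xkn, ← mul_div_assoc]
  refine div_le_div_of_nonneg_right ?_ (by positivity)
  exact_mod_cast monotoneOn_u_mul_Sig_succ p m ha hb hab

noncomputable def linearInterp (g : ℕ → ℝ) (t : ℝ) : ℝ :=
  g ⌊t⌋₊ + (t - ⌊t⌋₊) * (g (⌊t⌋₊ + 1) - g ⌊t⌋₊)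

lemma linearInterp_const_mul (c : ℝ) (g : ℕ → ℝ) (t : ℝ) :
    linearInterp (fun k => c * g k) t = c * linearInterp g t := by
  simp only [linearInterp]
  ring

lemma linearInterp_of_mem_Icc (g : ℕ → ℝ) {k : ℕ} {t : ℝ} (ht : t ∈ Set.Icc (k : ℝ) (k + 1)) :
    linearInterp g t = g k + (t - k) * (g (k + 1) - g k) := by
  rcases ht.2.eq_or_lt with rfl | hlt
  · simp only [linearInterp, Nat.floor_add_one (Nat.cast_nonneg k), Nat.floor_natCast]
    push_cast
    ring
  · rw [linearInterp, (Nat.floor_eq_iff ((Nat.cast_nonneg k).trans ht.1)).2 ⟨ht.1, hlt⟩]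

lemma monotoneOn_linearInterp_Icc {g : ℕ → ℝ} {k : ℕ} (hg : g k ≤ g (k + 1)) :
    MonotoneOn (linearInterp g) (Set.Icc (k : ℝ) (k + 1)) := by
  intro s hs t ht hst
  rw [linearInterp_of_mem_Icc g hs, linearInterp_of_mem_Icc g ht]
  have := sub_nonneg.2 hg
  gcongr

theorem MonotoneOn.linearInterp {g : ℕ → ℝ} {a b : ℕ} (hg : MonotoneOn g (Set.Icc a b)) :
    MonotoneOn (linearInterp g) (Set.Icc (a : ℝ) b) := by
  rcases lt_or_ge b a with hba | hab
  · rw [Set.Icc_eq_empty (by exact_mod_cast hba.not_ge)]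
    exact (Set.subsingleton_empty (α := ℝ)).monotoneOn _
  induction b, hab using Nat.le_induction with
  | base => simp [Set.subsingleton_singleton.monotoneOn]
  | succ b hab ih =>
    have hlast := monotoneOn_linearInterp_Icc (g := g)
      (hg ⟨hab, by omega⟩ ⟨by omega, le_rfl⟩ (by omega))
    have hb : (a : ℝ) ≤ b := by exact_mod_cast hab
    have := (ih (hg.mono (Set.Icc_subset_Icc_right (by omega)))).union_right hlast
      (isGreatest_Icc hb) (isLeast_Icc (by linarith))
    rwa [Set.Icc_union_Icc_eq_Icc hb (by linarith), ← Nat.cast_succ] at this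

lemma f_succ_eq_linearInterp (p : ℕ) {x : ℝ} (hx : 0 ≤ x) :
    f (p + 1) x = linearInterp (xkn (p + 1)) (2 ^ p * x) := by
  rcases hx.eq_or_lt with rfl | hpos
  · simp [f, linearInterp, xkn, Sig_succ_eq_sum]
  · rw [f, if_neg hpos.not_ge, linearInterp, Nat.add_sub_cancel]
    congr 2
    rw [mul_sub, mul_div_cancel₀ _ (by positivity : (2 : ℝ) ^ p ≠ 0)]

lemma monotoneOn_u_mul_f (p m : ℕ) :
    MonotoneOn (fun x => (u m : ℝ) * f (p + 1) x) (Set.Icc (m : ℝ) (m + 1)) := by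
  have hscale : Set.MapsTo (fun x : ℝ => 2 ^ p * x) (Set.Icc (m : ℝ) (m + 1))
      (Set.Icc ((m * 2 ^ p : ℕ) : ℝ) ((m + 1) * 2 ^ p : ℕ)) := fun x hx => by
    push_cast
    constructor <;> nlinarith [hx.1, hx.2, pow_pos (two_pos : (0 : ℝ) < 2) p]
  refine ((monotoneOn_u_mul_xkn p m).linearInterp.comp
    (fun x _ y _ hxy => by gcongr) hscale).congr fun x hx => ?_
  rw [Function.comp_apply, linearInterp_const_mul,
    f_succ_eq_linearInterp p ((Nat.cast_nonneg m).trans hx.1)]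

theorem f_monotone_on_unit_intervals (n : ℕ) (hn : 1 ≤ n) (m : ℕ) :
    (u m = -1 → AntitoneOn (f n) (Set.Icc (m : ℝ) (m + 1))) ∧
    (u m = 1 → MonotoneOn (f n) (Set.Icc (m : ℝ) (m + 1))) := by
  obtain ⟨p, rfl⟩ : ∃ p, n = p + 1 := ⟨n - 1, by omega⟩
  have h := monotoneOn_u_mul_f p m
  refine ⟨fun hu => ?_, fun hu => ?_⟩
  · simpa [hu] using h.neg
  · simpa [hu] using h
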